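/- arXiv:1405.0851 — 4 statements merged into one kernel-verified Lean document; each statement's English description precedes it below -/
import Mathlib

section
/- Let f : ℝ → ℝ be a differentiable function such that 4·s·(f′(s))² < 1 for every s ≥ 0. Then there is at most one real number c with c = f(c²); that is, if c = f(c²) and d = f(d²), then c = d. -/
/-! The function `t ↦ f (t²) - t` has derivative `2 t f'(t²) - 1`, and ellipticity at `s = t²` says
exactly that `(2 t f'(t²))² < 1`. So this function is strictly decreasing, hence has at most one
zero, and the zeros are precisely the solutions of `c = f (c²)`. -/

lemma lt_one_of_sq_lt_one {α : Type*} [Ring α] [LinearOrder α] [IsStrictOrderedRing α] {x : α}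
    (h : x ^ 2 < 1) : x < 1 :=
  (le_abs_self x).trans_lt ((sq_lt_one_iff_abs_lt_one x).1 h)

lemma hasDerivAt_comp_sq {f : ℝ → ℝ} {t : ℝ} (hf : DifferentiableAt ℝ f (t ^ 2)) :
    HasDerivAt (fun t => f (t ^ 2)) (deriv f (t ^ 2) * (2 * t)) t := by
  have hsq : HasDerivAt (fun t : ℝ => t ^ 2) (2 * t) t := by simpa using hasDerivAt_pow 2 t
  exact hf.hasDerivAt.comp (h := fun t : ℝ => t ^ 2) t hsq

lemma strictAnti_comp_sq_sub_id {f : ℝ → ℝ} (hf : Differentiable ℝ f)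
    (hell : ∀ s : ℝ, 0 ≤ s → 4 * s * (deriv f s) ^ 2 < 1) :
    StrictAnti fun t => f (t ^ 2) - t := by
  refine strictAnti_of_hasDerivAt_neg
    (fun t => (hasDerivAt_comp_sq (hf (t ^ 2))).sub (hasDerivAt_id t)) fun t => ?_
  have hsq : (deriv f (t ^ 2) * (2 * t)) ^ 2 < 1 := by
    calc (deriv f (t ^ 2) * (2 * t)) ^ 2 = 4 * t ^ 2 * deriv f (t ^ 2) ^ 2 := by ring
      _ < 1 := hell (t ^ 2) (sq_nonneg t)
  linarith [lt_one_of_sq_lt_one hsq]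

theorem elliptic_fixed_point_unique
    (f : ℝ → ℝ) (hf : Differentiable ℝ f)
    (hell : ∀ s : ℝ, 0 ≤ s → 4 * s * (deriv f s) ^ 2 < 1)
    (c d : ℝ) (hc : c = f (c ^ 2)) (hd : d = f (d ^ 2)) :
    c = d := by
  apply (strictAnti_comp_sq_sub_id hf hell).injective
  simp only [← hc, ← hd, sub_self]
end

section
/- Let f : ℝ → ℝ be differentiable on (0, ∞) with 4·t·(f′(t))² < 1 for all t > 0, and suppose there exists t₀ > 0 with f(t₀) = √t₀. Then: (i) for every t > t₀ one has 2√t₀ − √t < f(t) < √t, and (ii) for every t with 0 < t < t₀ one has f(t) > √t. -/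
/-!
Ellipticity says exactly that `|f'(t)| < 1 / (2√t) = (√t)'`, so `f - √·` is strictly decreasing
and `f + √·` strictly increasing on `(0, ∞)`. At the crossing point `t₀` the first vanishes and
the second equals `2√t₀`, which gives all three bounds.
-/

open Set Real

namespace Real

lemma abs_lt_one_div_two_sqrt_of_four_mul_mul_sq_lt {t d : ℝ} (ht : 0 < t)
    (h : 4 * t * d ^ 2 < 1) : |d| < 1 / (2 * √t) := by
  rw [lt_div_iff₀ (by positivity)]
  refine (pow_lt_one_iff_of_nonneg (by positivity) two_ne_zero).mp ?_
  calc (|d| * (2 * √t)) ^ 2 = 4 * t * d ^ 2 := by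
        rw [mul_pow, mul_pow, sq_abs, sq_sqrt ht.le]; ring
    _ < 1 := h

variable {f : ℝ → ℝ} (hf : ∀ t, 0 < t → DifferentiableAt ℝ f t)
  (hf' : ∀ t, 0 < t → |deriv f t| < 1 / (2 * √t))
include hf hf'

lemma strictAntiOn_sub_sqrt_of_abs_deriv_lt : StrictAntiOn (fun t => f t - √t) (Ioi 0) := by
  refine strictAntiOn_of_deriv_neg (convex_Ioi 0) ?_ fun t ht => ?_
  · exact fun t ht => ((hf t ht).sub
      (hasDerivAt_sqrt ht.ne').differentiableAt).continuousAt.continuousWithinAt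
  rw [interior_Ioi] at ht
  rw [deriv_fun_sub (hf t ht) (hasDerivAt_sqrt ht.ne').differentiableAt,
    (hasDerivAt_sqrt ht.ne').deriv]
  linarith [le_abs_self (deriv f t), hf' t ht]

lemma strictMonoOn_add_sqrt_of_abs_deriv_lt : StrictMonoOn (fun t => f t + √t) (Ioi 0) := by
  refine strictMonoOn_of_deriv_pos (convex_Ioi 0) ?_ fun t ht => ?_
  · exact fun t ht => ((hf t ht).add
      (hasDerivAt_sqrt ht.ne').differentiableAt).continuousAt.continuousWithinAt
  rw [interior_Ioi] at ht
  rw [deriv_fun_add (hf t ht) (hasDerivAt_sqrt ht.ne').differentiableAt,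
    (hasDerivAt_sqrt ht.ne').deriv]
  linarith [neg_abs_le (deriv f t), hf' t ht]

end Real

theorem elliptic_bounds_from_crossing
    (f : ℝ → ℝ)
    (hf : ∀ t : ℝ, 0 < t → DifferentiableAt ℝ f t)
    (hell : ∀ t : ℝ, 0 < t → 4 * t * (deriv f t) ^ 2 < 1)
    (t₀ : ℝ) (ht₀ : 0 < t₀) (hcross : f t₀ = Real.sqrt t₀) :
    (∀ t : ℝ, t₀ < t →
        2 * Real.sqrt t₀ - Real.sqrt t < f t ∧ f t < Real.sqrt t) ∧
      (∀ t : ℝ, 0 < t → t < t₀ → Real.sqrt t < f t) := by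
  have hf' t ht := abs_lt_one_div_two_sqrt_of_four_mul_mul_sq_lt ht (hell t ht)
  have hanti := strictAntiOn_sub_sqrt_of_abs_deriv_lt hf hf'
  have hmono := strictMonoOn_add_sqrt_of_abs_deriv_lt hf hf'
  refine ⟨fun t ht => ?_, fun t ht htt₀ => ?_⟩
  · have hbelow := hanti (mem_Ioi.mpr ht₀) (mem_Ioi.mpr (ht₀.trans ht)) ht
    have habove := hmono (mem_Ioi.mpr ht₀) (mem_Ioi.mpr (ht₀.trans ht)) ht
    dsimp only at hbelow habove
    constructor <;> linarith
  · have habove := hanti (mem_Ioi.mpr ht) (mem_Ioi.mpr ht₀) htt₀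
    dsimp only at habove
    linarith
end

section
/- Let f : ℝ → ℝ be differentiable on (0, ∞) with 4·t·(f′(t))² < 1 for all t > 0, and suppose there exists t₀ > 0 with f(t₀) = √t₀. Then for every t > 0 with f(t) ≤ √t one has t ≥ t₀ and f(t) + √t ≥ 2√t₀. -/
/-!
Ellipticity says exactly that `|f'(t)| < 1 / (2√t) = (√·)'(t)`, so both `√t - f t` and
`f t + √t` are strictly increasing on `(0, ∞)`. The first vanishes at `t₀`, hence is negative
before `t₀`, which forces `t₀ ≤ t` wherever `f t ≤ √t`; the second then gives
`f t + √t ≥ f t₀ + √t₀ = 2√t₀`.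
-/

open Set

theorem abs_lt_one_div_two_mul_sqrt_of_four_mul_mul_sq_lt {t d : ℝ} (ht : 0 < t)
    (h : 4 * t * d ^ 2 < 1) : |d| < 1 / (2 * √t) := by
  have hsqrt : 0 < √t := Real.sqrt_pos.2 ht
  have hsq : (2 * √t * |d|) ^ 2 < 1 := by
    rw [mul_pow, mul_pow, sq_abs, Real.sq_sqrt ht.le]; linarith
  rw [lt_div_iff₀ (by positivity), mul_comm]
  exact (sq_lt_one_iff₀ (by positivity)).1 hsq

section MonotoneOfDerivLt

variable {s : Set ℝ} {f g : ℝ → ℝ}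

theorem strictMonoOn_sub_of_deriv_lt (hs : Convex ℝ s) (hso : IsOpen s)
    (hf : ∀ x ∈ s, DifferentiableAt ℝ f x) (hg : ∀ x ∈ s, DifferentiableAt ℝ g x)
    (hlt : ∀ x ∈ s, deriv f x < deriv g x) : StrictMonoOn (fun x => g x - f x) s := by
  refine strictMonoOn_of_deriv_pos hs
    (fun x hx => ((hg x hx).sub (hf x hx)).continuousAt.continuousWithinAt) fun x hx => ?_
  rw [hso.interior_eq] at hx
  rw [deriv_fun_sub (hg x hx) (hf x hx)]
  exact sub_pos.2 (hlt x hx)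

theorem strictMonoOn_add_of_neg_deriv_lt (hs : Convex ℝ s) (hso : IsOpen s)
    (hf : ∀ x ∈ s, DifferentiableAt ℝ f x) (hg : ∀ x ∈ s, DifferentiableAt ℝ g x)
    (hlt : ∀ x ∈ s, -deriv f x < deriv g x) : StrictMonoOn (fun x => f x + g x) s := by
  have := strictMonoOn_sub_of_deriv_lt hs hso (f := fun x => -f x)
    (fun x hx => (hf x hx).neg) hg (fun x hx => by rw [deriv.fun_neg]; exact hlt x hx)
  simpa only [sub_neg_eq_add, add_comm] using this

end MonotoneOfDerivLt

theorem elliptic_larger_principal_curvature_bound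
    (f : ℝ → ℝ)
    (hf : ∀ t : ℝ, 0 < t → DifferentiableAt ℝ f t)
    (hell : ∀ t : ℝ, 0 < t → 4 * t * (deriv f t) ^ 2 < 1)
    (t₀ : ℝ) (ht₀ : 0 < t₀) (hcross : f t₀ = Real.sqrt t₀) :
    ∀ t : ℝ, 0 < t → f t ≤ Real.sqrt t →
      t₀ ≤ t ∧ 2 * Real.sqrt t₀ ≤ f t + Real.sqrt t := by
  intro t ht hft
  have hsqrt (x : ℝ) (hx : x ∈ Ioi (0 : ℝ)) : HasDerivAt Real.sqrt (1 / (2 * √x)) x :=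
    Real.hasDerivAt_sqrt hx.ne'
  have habs (x : ℝ) (hx : x ∈ Ioi (0 : ℝ)) : |deriv f x| < deriv Real.sqrt x := by
    rw [(hsqrt x hx).deriv]
    exact abs_lt_one_div_two_mul_sqrt_of_four_mul_mul_sq_lt hx (hell x hx)
  have hsub := strictMonoOn_sub_of_deriv_lt (convex_Ioi 0) isOpen_Ioi hf
    (fun x hx => (hsqrt x hx).differentiableAt) fun x hx => (abs_lt.1 (habs x hx)).2
  have hadd := strictMonoOn_add_of_neg_deriv_lt (convex_Ioi 0) isOpen_Ioi hf
    (fun x hx => (hsqrt x hx).differentiableAt) fun x hx => neg_lt.1 (abs_lt.1 (habs x hx)).1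
  have ht₀t : t₀ ≤ t := by
    by_contra! htt₀
    linarith [hsub (mem_Ioi.2 ht) (mem_Ioi.2 ht₀) htt₀]
  exact ⟨ht₀t, by linarith [hadd.monotoneOn (mem_Ioi.2 ht₀) (mem_Ioi.2 ht) ht₀t]⟩
end

section
/- Let v₀ be a nonzero vector in Euclidean space ℝ³ and let (Cₙ) be a sequence of nonempty compact subsets of ℝ³ with diam(Cₙ) → 0, such that the cylinders Rₙ = {c + t·v₀ : c ∈ Cₙ, t ∈ ℝ} are nested, i.e. Rₙ₊₁ ⊆ Rₙ for all n. Then there exists x₀ ∈ ℝ³ such that, setting L = {x₀ + t·v₀ : t ∈ ℝ}, for every n and every point x ∈ Rₙ the distance from x to L satisfies dist(x, L) ≤ diam(Cₙ). -/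
/-!
Project orthogonally onto the hyperplane `v₀ᗮ`. Translation along `v₀` is invisible to this
projection `P`, so the nested cylinders give nested compact sets `P(Cₙ)`, whose intersection
contains a point `x₀`. A point `x` of `Rₙ` lies on the line through `P x` in direction `v₀`, so its
distance to `x₀ + ℝ v₀` is at most `‖P x - x₀‖`, and since `P` is `1`-Lipschitz and `x₀ ∈ P(Cₙ)`
this is at most `diam Cₙ`.
-/

open Filter Topology Metric Submodule

variable {E : Type*} [NormedAddCommGroup E] [InnerProductSpace ℝ E]

def cylinder (C : Set E) (v : E) : Set E := {x | ∃ c ∈ C, ∃ t : ℝ, x = c + t • v}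

theorem starProjection_orthogonal_singleton_add_smul (v x : E) (t : ℝ) :
    (ℝ ∙ v)ᗮ.starProjection (x + t • v) = (ℝ ∙ v)ᗮ.starProjection x := by
  rw [map_add, map_smul, starProjection_orthogonalComplement_singleton_eq_zero, smul_zero,
    add_zero]

theorem image_starProjection_cylinder (C : Set E) (v : E) :
    (ℝ ∙ v)ᗮ.starProjection '' cylinder C v = (ℝ ∙ v)ᗮ.starProjection '' C := by
  ext y
  constructor
  · rintro ⟨-, ⟨c, hc, t, rfl⟩, rfl⟩
    exact ⟨c, hc, (starProjection_orthogonal_singleton_add_smul v c t).symm⟩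
  · rintro ⟨c, hc, rfl⟩
    exact ⟨c, ⟨c, hc, 0, by simp⟩, rfl⟩

theorem exists_eq_starProjection_orthogonal_singleton_add_smul (v x : E) :
    ∃ t : ℝ, x = (ℝ ∙ v)ᗮ.starProjection x + t • v := by
  obtain ⟨t, ht⟩ := mem_span_singleton.mp ((ℝ ∙ v).starProjection_apply_mem x)
  exact ⟨t, by rw [ht, starProjection_orthogonal_val, sub_add_cancel]⟩

theorem infDist_line_le_norm_starProjection_sub (v x p : E) :
    infDist x {y | ∃ t : ℝ, y = p + t • v} ≤ ‖(ℝ ∙ v)ᗮ.starProjection x - p‖ := by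
  obtain ⟨t, ht⟩ := exists_eq_starProjection_orthogonal_singleton_add_smul v x
  calc infDist x {y | ∃ t : ℝ, y = p + t • v}
      ≤ dist x (p + t • v) := infDist_le_dist_of_mem ⟨t, rfl⟩
    _ = ‖(ℝ ∙ v)ᗮ.starProjection x - p‖ := by
      rw [dist_eq_norm]
      congr 1
      nth_rw 1 [ht]
      abel

theorem infDist_line_le_diam {C : Set E} (hC : Bornology.IsBounded C) {v x p : E}
    (hx : x ∈ cylinder C v) (hp : p ∈ (ℝ ∙ v)ᗮ.starProjection '' C) :
    infDist x {y | ∃ t : ℝ, y = p + t • v} ≤ diam C := by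
  obtain ⟨c, hc, t, rfl⟩ := hx
  obtain ⟨c', hc', rfl⟩ := hp
  calc infDist (c + t • v) {y | ∃ t : ℝ, y = (ℝ ∙ v)ᗮ.starProjection c' + t • v}
      ≤ ‖(ℝ ∙ v)ᗮ.starProjection (c + t • v) - (ℝ ∙ v)ᗮ.starProjection c'‖ :=
        infDist_line_le_norm_starProjection_sub v _ _
    _ = ‖(ℝ ∙ v)ᗮ.starProjection (c - c')‖ := by
      rw [starProjection_orthogonal_singleton_add_smul, map_sub]
    _ ≤ dist c c' := (norm_starProjection_apply_le _ _).trans (dist_eq_norm c c').ge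
    _ ≤ diam C := dist_le_diam_of_mem hC hc hc'

theorem nested_cylinders_distance_to_line_general
    (v₀ : EuclideanSpace ℝ (Fin 3))
    (C : ℕ → Set (EuclideanSpace ℝ (Fin 3)))
    (hne : ∀ n, (C n).Nonempty)
    (hcpt : ∀ n, IsCompact (C n))
    (R : ℕ → Set (EuclideanSpace ℝ (Fin 3)))
    (hR : ∀ n, R n = {x | ∃ c ∈ C n, ∃ t : ℝ, x = c + t • v₀})
    (hnested : ∀ n, R (n + 1) ⊆ R n) :
    ∃ x₀ : EuclideanSpace ℝ (Fin 3),
      ∀ n, ∀ x ∈ R n,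
        Metric.infDist x {y | ∃ t : ℝ, y = x₀ + t • v₀} ≤ Metric.diam (C n) := by
  obtain rfl : R = fun n => cylinder (C n) v₀ := funext hR
  set P := (ℝ ∙ v₀)ᗮ.starProjection
  have hP : ∀ D, P '' cylinder D v₀ = P '' D := (image_starProjection_cylinder · v₀)
  have hPC_nested : ∀ n, P '' C (n + 1) ⊆ P '' C n := fun n => by
    simpa only [hP] using Set.image_mono (f := P) (hnested n)
  have hPC_compact : ∀ n, IsCompact (P '' C n) := fun n => (hcpt n).image P.continuous
  obtain ⟨x₀, hx₀⟩ := IsCompact.nonempty_iInter_of_sequence_nonempty_isCompact_isClosed _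
    hPC_nested (fun n => (hne n).image P) (hPC_compact 0) (fun n => (hPC_compact n).isClosed)
  exact ⟨x₀, fun n x hx =>
    infDist_line_le_diam (hcpt n).isBounded hx (Set.mem_iInter.mp hx₀ n)⟩

theorem nested_cylinders_distance_to_line
    (v₀ : EuclideanSpace ℝ (Fin 3)) (hv₀ : v₀ ≠ 0)
    (C : ℕ → Set (EuclideanSpace ℝ (Fin 3)))
    (hne : ∀ n, (C n).Nonempty)
    (hcpt : ∀ n, IsCompact (C n))
    (hdiam : Tendsto (fun n => Metric.diam (C n)) atTop (𝓝 0))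
    (R : ℕ → Set (EuclideanSpace ℝ (Fin 3)))
    (hR : ∀ n, R n = {x | ∃ c ∈ C n, ∃ t : ℝ, x = c + t • v₀})
    (hnested : ∀ n, R (n + 1) ⊆ R n) :
    ∃ x₀ : EuclideanSpace ℝ (Fin 3),
      ∀ n, ∀ x ∈ R n,
        Metric.infDist x {y | ∃ t : ℝ, y = x₀ + t • v₀} ≤ Metric.diam (C n) :=
  nested_cylinders_distance_to_line_general v₀ C hne hcpt R hR hnested
end
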